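/- Fix n ≥ 1, J ∈ ℕ, λ ∈ ℂ. In the notation below, the trace of the truncated first-order Birman–Schwinger matrix satisfies tr 𝒦̂_J(λ) = −( tr Â₁,₀ + 2n ) · ∑_{|j|≤J} 1/(ij − 1) = ( tr Â₁,₀ + 2n ) · ( 1 + ∑_{j=1}^{J} 2/(j² + 1) ); in particular it is independent of λ. -/

import Mathlib

open Complex Matrix Finset

attribute [local instance] Matrix.normedAddCommGroup Matrix.normedSpace

def jv (J : ℕ) (a : Fin (2 * J + 1)) : ℤ := ((a : ℕ) : ℤ) - (J : ℤ)

noncomputable def fc {k : Type*} (f : ℝ → Matrix k k ℂ) (m : ℤ) : Matrix k k ℂ :=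
  fun i j => (2 * Real.pi : ℂ)⁻¹ *
    ∫ x in (0:ℝ)..(2 * Real.pi), f x i j * Complex.exp (-(Complex.I) * (m : ℂ) * x)

noncomputable def firstOrderA {n : ℕ} (A1 A1' A0 B0 : ℝ → Matrix (Fin n) (Fin n) ℂ)
    (lam : ℂ) (x : ℝ) : Matrix (Fin n ⊕ Fin n) (Fin n ⊕ Fin n) ℂ :=
  Matrix.fromBlocks 0 1 (lam • B0 x - A0 x - A1' x) (-(A1 x))

noncomputable def KhatJ {n : ℕ} (J : ℕ) (A1 A1' A0 B0 : ℝ → Matrix (Fin n) (Fin n) ℂ)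
    (lam : ℂ) :
    Matrix (Fin (2 * J + 1) × (Fin n ⊕ Fin n)) (Fin (2 * J + 1) × (Fin n ⊕ Fin n)) ℂ :=
  fun p q => (Complex.I * ((jv J p.1 : ℤ) : ℂ) - 1)⁻¹ *
    (fc (firstOrderA A1 A1' A0 B0 lam) (jv J p.1 - jv J q.1) p.2 q.2 -
      if p = q then 1 else 0)

/-!
Only the diagonal blocks `(j, j)` of `𝒦̂_J(λ)` contribute to its trace, and they involve just the
mean `𝔸̂₀(λ)`. Its upper-left block is `0` and its lower-right block is `-Â₁,₀`, while the `λ`-dependent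
block `λB₀ - A₀ - A₁'` is off-diagonal, so `tr(𝔸̂₀(λ) - I₂ₙ) = -(tr Â₁,₀ + 2n)` for every `λ`.
What remains is the scalar sum `∑_{|j|≤J} (ij - 1)⁻¹`, which pairs `j` with `-j` into
`-2/(j² + 1)`.
-/

lemma I_mul_intCast_sub_one_ne_zero (m : ℤ) : I * (m : ℂ) - 1 ≠ 0 := by
  intro h
  simpa using congrArg re h

lemma inv_I_mul_sub_one_add_inv_I_mul_neg_sub_one (m : ℤ) :
    (I * (m : ℂ) - 1)⁻¹ + (I * ((-m : ℤ) : ℂ) - 1)⁻¹ = -(2 * ((m : ℂ) ^ 2 + 1)⁻¹) := by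
  have hprod : (I * (m : ℂ) - 1) * (I * ((-m : ℤ) : ℂ) - 1) = (m : ℂ) ^ 2 + 1 := by
    push_cast
    linear_combination (-(m : ℂ) ^ 2) * I_sq
  rw [inv_add_inv (I_mul_intCast_sub_one_ne_zero m) (I_mul_intCast_sub_one_ne_zero (-m)), hprod]
  push_cast
  ring

lemma sum_Icc_inv_I_mul_sub_one (J : ℕ) :
    ∑ j ∈ Icc (-(J : ℤ)) J, (I * (j : ℂ) - 1)⁻¹
      = -(1 + ∑ j ∈ Icc 1 J, 2 * ((j : ℂ) ^ 2 + 1)⁻¹) := by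
  induction J with
  | zero => norm_num
  | succ J ih =>
    have hIcc : Icc (-(J + 1 : ℤ)) (J + 1)
        = insert (-(J + 1 : ℤ)) (insert (J + 1 : ℤ) (Icc (-(J : ℤ)) J)) := by
      ext x
      simp only [mem_Icc, mem_insert]
      omega
    have hpair := inv_I_mul_sub_one_add_inv_I_mul_neg_sub_one ((J : ℤ) + 1)
    push_cast at hIcc hpair ⊢
    rw [hIcc, sum_insert (by simp only [mem_insert, mem_Icc]; omega),
      sum_insert (by simp only [mem_Icc]; omega), ih, sum_Icc_succ_top (by omega)]
    push_cast
    linear_combination hpair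

lemma sum_fin_jv_eq_sum_Icc {M : Type*} [AddCommMonoid M] (J : ℕ) (f : ℤ → M) :
    ∑ a : Fin (2 * J + 1), f (jv J a) = ∑ j ∈ Icc (-(J : ℤ)) J, f j := by
  refine sum_bij (fun a _ => jv J a) (fun a _ => ?_) (fun a _ b _ h => ?_)
    (fun j hj => ?_) (fun _ _ => rfl)
  · simp only [jv, mem_Icc]
    omega
  · simp only [jv, sub_left_inj, Nat.cast_inj] at h
    exact Fin.ext h
  · rw [mem_Icc] at hj
    exact ⟨⟨(j + J).toNat, by omega⟩, mem_univ _, by simp only [jv]; omega⟩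

section FourierCoefficients

variable {k l : Type*}

lemma fc_zero (m : ℤ) : fc (0 : ℝ → Matrix k k ℂ) m = 0 := by
  ext i j
  simp [fc]

lemma fc_neg (f : ℝ → Matrix k k ℂ) (m : ℤ) : fc (-f) m = -fc f m := by
  ext i j
  simp [fc]

variable [Fintype k] [Fintype l]

lemma trace_fc_fromBlocks (A : ℝ → Matrix k k ℂ) (B : ℝ → Matrix k l ℂ)
    (C : ℝ → Matrix l k ℂ) (D : ℝ → Matrix l l ℂ) (m : ℤ) :
    (fc (fun x => fromBlocks (A x) (B x) (C x) (D x)) m).trace = (fc A m).trace + (fc D m).trace :=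
  Fintype.sum_sum_type _

end FourierCoefficients

lemma trace_fc_firstOrderA_zero {n : ℕ} (A1 A1' A0 B0 : ℝ → Matrix (Fin n) (Fin n) ℂ) (lam : ℂ) :
    (fc (firstOrderA A1 A1' A0 B0 lam) 0).trace = -(fc A1 0).trace := by
  refine (trace_fc_fromBlocks (fun _ => 0) (fun _ => 1) (fun x => lam • B0 x - A0 x - A1' x) (-A1)
    0).trans ?_
  simp only [fc_neg, trace_neg, ← Pi.zero_def, fc_zero, trace_zero, zero_add]

lemma trace_KhatJ {n : ℕ} (J : ℕ) (A1 A1' A0 B0 : ℝ → Matrix (Fin n) (Fin n) ℂ) (lam : ℂ) :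
    (KhatJ J A1 A1' A0 B0 lam).trace
      = -((fc A1 0).trace + 2 * n) * ∑ j ∈ Icc (-(J : ℤ)) J, (I * (j : ℂ) - 1)⁻¹ := by
  have hblock : ∀ a, ∑ s, KhatJ J A1 A1' A0 B0 lam (a, s) (a, s)
      = (I * (jv J a : ℂ) - 1)⁻¹ * -((fc A1 0).trace + 2 * n) := by
    intro a
    simp only [KhatJ, sub_self, if_true, ← mul_sum, sum_sub_distrib]
    rw [show ∑ s, fc (firstOrderA A1 A1' A0 B0 lam) 0 s s = -(fc A1 0).trace from
      trace_fc_firstOrderA_zero A1 A1' A0 B0 lam]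
    simp only [sum_const, card_univ, Fintype.card_sum, Fintype.card_fin, nsmul_eq_mul]
    push_cast
    ring
  rw [trace, Fintype.sum_prod_type]
  simp only [diag_apply, hblock]
  rw [← sum_mul, sum_fin_jv_eq_sum_Icc J (fun j : ℤ => (I * (j : ℂ) - 1)⁻¹), mul_comm]

theorem trace_of_truncated_first_order_BS_general
    (n : ℕ) (J : ℕ) (lam : ℂ)
    (A1 A1' A0 B0 : ℝ → Matrix (Fin n) (Fin n) ℂ) :
    (KhatJ J A1 A1' A0 B0 lam).trace =
        -(((fc A1 0).trace + 2 * (n : ℂ)) *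
          ∑ j ∈ Finset.Icc (-(J : ℤ)) (J : ℤ), (Complex.I * (j : ℂ) - 1)⁻¹)
      ∧ (KhatJ J A1 A1' A0 B0 lam).trace =
        ((fc A1 0).trace + 2 * (n : ℂ)) *
          (1 + ∑ j ∈ Finset.Icc 1 J, 2 * (((j : ℂ)) ^ 2 + 1)⁻¹) := by
  rw [trace_KhatJ, sum_Icc_inv_I_mul_sub_one]
  constructor <;> ring

/-- The trace of the truncated first-order Birman–Schwinger
matrix satisfies
`tr 𝒦̂_J(λ) = −(tr Â₁,₀ + 2n) ∑_{|j|≤J} 1/(ij−1) = (tr Â₁,₀ + 2n)(1 + ∑_{j=1}^J 2/(j²+1))`;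
in particular it is independent of `λ`. -/
theorem trace_of_truncated_first_order_BS
    (n : ℕ) (hn : 1 ≤ n) (J : ℕ) (lam : ℂ)
    (A1 A1' A0 B0 : ℝ → Matrix (Fin n) (Fin n) ℂ)
    (hA1 : ∀ x : ℝ, HasDerivAt A1 (A1' x) x) (hA1' : Continuous A1')
    (hA0 : Continuous A0) (hB0 : Continuous B0)
    (hA1per : ∀ x : ℝ, A1 (x + 2 * Real.pi) = A1 x)
    (hA0per : ∀ x : ℝ, A0 (x + 2 * Real.pi) = A0 x)
    (hB0per : ∀ x : ℝ, B0 (x + 2 * Real.pi) = B0 x) :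
    (KhatJ J A1 A1' A0 B0 lam).trace =
        -(((fc A1 0).trace + 2 * (n : ℂ)) *
          ∑ j ∈ Finset.Icc (-(J : ℤ)) (J : ℤ), (Complex.I * (j : ℂ) - 1)⁻¹)
      ∧ (KhatJ J A1 A1' A0 B0 lam).trace =
        ((fc A1 0).trace + 2 * (n : ℂ)) *
          (1 + ∑ j ∈ Finset.Icc 1 J, 2 * (((j : ℂ)) ^ 2 + 1)⁻¹) :=
  trace_of_truncated_first_order_BS_general n J lam A1 A1' A0 B0
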